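/- arXiv:2505.02627 — 2 statements merged into one kernel-verified Lean document; each statement's English description precedes it below -/
import Mathlib

section
/- Under the same setup as the previous lemma (h = H(x₁,x₂), y = G(h,x₃) correct on training data a–f), whenever two training samples A, C among {a,...,f} satisfy h(A) = h(C), they also satisfy z(A) = z(C), where z = x₁ ⊕ x₂. That is, the hypothesis hidden representation is 'unambiguous' with respect to the reference value z on the training set. -/
theorem unambiguous_hidden_representation {S : Type*}
    (H : Bool → Bool → S) (h : Bool × Bool × Bool → S)
    (hh : ∀ x, h x = H x.1 x.2.1)
    (G : S → Bool → Bool) (y : Bool × Bool × Bool → Bool)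
    (hy : ∀ x, y x = G (h x) x.2.2)
    (z : Bool × Bool × Bool → Bool) (hz : ∀ x, z x = xor x.1 x.2.1)
    (train : List (Bool × Bool × Bool))
    (htrain : train = [(false, false, false), (false, true, false),
      (true, false, true), (true, true, true),
      (false, false, true), (false, true, true)])
    (hcorrect : ∀ x ∈ train, y x = xor x.1 (xor x.2.1 x.2.2)) :
    ∀ A ∈ train, ∀ C ∈ train, h A = h C → z A = z C := by
  subst htrain
  have g1 : G (H false false) true = true := by
    have := hcorrect (false, false, true) (by simp)
    simpa [hy, hh] using this
  have g2 : G (H false true) true = false := by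
    have := hcorrect (false, true, true) (by simp)
    simpa [hy, hh] using this
  have g3 : G (H true false) true = false := by
    have := hcorrect (true, false, true) (by simp)
    simpa [hy, hh] using this
  have g4 : G (H true true) true = true := by
    have := hcorrect (true, true, true) (by simp)
    simpa [hy, hh] using this
  intro A hA C hC heq
  rw [hh, hh] at heq
  simp only [List.mem_cons, List.not_mem_nil, or_false] at hA hC
  rcases hA with rfl | rfl | rfl | rfl | rfl | rfl <;>
    rcases hC with rfl | rfl | rfl | rfl | rfl | rfl <;>
    simp only [hz] <;> simp_all
end

section
/- In the XOR minimal example with only four training samples a=(0,0,0), b=(0,1,0), c=(1,0,1), d=(1,1,1) (samples e, f removed), the assignment h(x₁,x₂,x₃) = x₂ is consistent with correct training predictions via some readout G (i.e., there exists G : {0,1}×{0,1} → {0,1} with G(x₂, x₃) = x₁⊕x₂⊕x₃ on a,b,c,d), yet it violates unambiguity: h(a) = h(c) = 0 while z(a) = 0 ≠ 1 = z(c), where z = x₁⊕x₂. -/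
theorem ambiguity_counterexample
    (h : Bool × Bool × Bool → Bool) (hh : ∀ x, h x = x.2.1)
    (z : Bool × Bool × Bool → Bool) (hz : ∀ x, z x = xor x.1 x.2.1)
    (a b c d : Bool × Bool × Bool)
    (ha : a = (false, false, false)) (hb : b = (false, true, false))
    (hc : c = (true, false, true)) (hd : d = (true, true, true)) :
    (∃ G : Bool → Bool → Bool, ∀ x ∈ [a, b, c, d],
      G (h x) x.2.2 = xor x.1 (xor x.2.1 x.2.2)) ∧
    h a = h c ∧ z a ≠ z c := by
  subst ha hb hc hd
  refine ⟨⟨fun u _ => u, ?_⟩, ?_, ?_⟩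
  · intro x hx
    simp [hh] at *
    rcases hx with h|h|h|h <;> subst h <;> rfl
  · simp [hh]
  · simp [hz]
end
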